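/- arXiv:1501.01842 — 5 statements merged into one kernel-verified Lean document; each statement's English description precedes it below -/
import Mathlib

section
/- Let N be a zero symmetric near-ring and Γ an N-group of type 1, and let S = Aut_N(Γ) be the group of N-automorphisms of Γ. Then there exists a set X of representatives of the equivalence relation ∼ (where γ₁ ∼ γ₂ iff nγ₁ = nγ₂ for all n ∈ N) such that S(X) ⊆ X and 0 ∈ X. -/
/-!
The `N`-automorphisms act on `Γ` compatibly with `∼`. A point `γ` with `Nγ = Γ` is fixed by every
automorphism `s` with `sγ ∼ γ`: writing `γ = nγ` gives `sγ = n(sγ) = nγ = γ`. The same holds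
trivially for `0`, and by type 1 every class contains a point of one of these two kinds. Choosing
one such point in each orbit of classes, with `0` chosen for its own class, the union of the orbits
of the chosen points is an invariant set of representatives.
-/

namespace Setoid

variable {G α : Type*} [Group G] [MulAction G α]

variable (G) in
def IsRigidPoint (r : Setoid α) (a : α) : Prop :=
  ∀ g : G, r (g • a) a → g • a = a

def orbitClosure (r : Setoid α) (hr : ∀ (g : G) {a b : α}, r a b → r (g • a) (g • b)) :
    Setoid α where
  r a b := ∃ g : G, r (g • a) b
  iseqv :=
    { refl a := ⟨1, by rw [one_smul]⟩
      symm := by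
        rintro a b ⟨g, hg⟩
        refine ⟨g⁻¹, r.symm ?_⟩
        simpa only [inv_smul_smul] using hr g⁻¹ hg
      trans := by
        rintro a b c ⟨g, hg⟩ ⟨h, hh⟩
        exact ⟨h * g, r.trans (by simpa only [mul_smul] using hr h hg) hh⟩ }

theorem exists_invariant_transversal_mem (r : Setoid α)
    (hr : ∀ (g : G) {a b : α}, r a b → r (g • a) (g • b))
    (hrigid : ∀ a, ∃ b, r b a ∧ IsRigidPoint G r b) {z : α} (hz : IsRigidPoint G r z) :
    ∃ X : Set α, (∀ a, ∃ x ∈ X, r x a) ∧ (∀ x ∈ X, ∀ y ∈ X, r x y → x = y) ∧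
      (∀ g : G, ∀ x ∈ X, g • x ∈ X) ∧ z ∈ X := by
  let R := orbitClosure r hr
  have hrep : ∀ q : Quotient R,
      ∃ c, IsRigidPoint G r c ∧ Quotient.mk R c = q ∧ (q = Quotient.mk R z → c = z) := by
    refine Quotient.ind fun a => ?_
    by_cases haz : R a z
    · exact ⟨z, hz, Quotient.sound (R.symm haz), fun _ => rfl⟩
    · obtain ⟨b, hba, hb⟩ := hrigid a
      refine ⟨b, hb, Quotient.sound ⟨1, by rwa [one_smul]⟩, fun h => absurd (Quotient.exact h) haz⟩
  choose rep hrep_rigid hrep_mk hrep_z using hrep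
  refine ⟨Set.range fun p : G × Quotient R => p.1 • rep p.2, fun a => ?_, ?_, ?_, ?_⟩
  · obtain ⟨g, hg⟩ := Quotient.exact (hrep_mk (Quotient.mk R a))
    exact ⟨_, ⟨(g, _), rfl⟩, hg⟩
  · rintro _ ⟨⟨g, q⟩, rfl⟩ _ ⟨⟨h, q'⟩, rfl⟩ hxy
    have hmoved : r ((h⁻¹ * g) • rep q) (rep q') := by
      simpa only [mul_smul, inv_smul_smul] using hr h⁻¹ hxy
    obtain rfl : q = q' := by
      rw [← hrep_mk q, ← hrep_mk q']
      exact Quotient.sound ⟨_, hmoved⟩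
    calc g • rep q = h • (h⁻¹ * g) • rep q := by rw [smul_smul, mul_inv_cancel_left]
      _ = h • rep q := by rw [hrep_rigid q _ hmoved]
  · rintro g _ ⟨⟨h, q⟩, rfl⟩
    exact ⟨(g * h, q), mul_smul g h (rep q)⟩
  · exact ⟨(1, Quotient.mk R z), by simp only [one_smul, hrep_z _ rfl]⟩

end Setoid

section NGroup

variable {N Γ : Type*}

theorem zero_smul_of_add_smul [AddZeroClass N] [AddGroup Γ] [SMul N Γ]
    (hact_add : ∀ (m n : N) (γ : Γ), (m + n) • γ = m • γ + n • γ) (γ : Γ) :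
    (0 : N) • γ = 0 := by
  simpa only [add_zero, left_eq_add] using hact_add 0 0 γ

theorem smul_zero_of_mul_zero [Zero N] [Mul N] [Zero Γ] [SMul N Γ]
    (hzs : ∀ n : N, n * 0 = 0) (hact_mul : ∀ (m n : N) (γ : Γ), (m * n) • γ = m • (n • γ))
    (hzero_smul : ∀ γ : Γ, (0 : N) • γ = 0) (n : N) : n • (0 : Γ) = 0 := by
  rw [← hzero_smul 0, ← hact_mul, hzs]

variable (N Γ) [SMul N Γ]

def equivariantPerm : Subgroup (Equiv.Perm Γ) where
  carrier := {σ | ∀ (n : N) (γ : Γ), σ (n • γ) = n • σ γ}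
  mul_mem' {σ τ} hσ hτ n γ := by simp only [Equiv.Perm.mul_apply, hτ n, hσ n]
  one_mem' _ _ := rfl
  inv_mem' {σ} hσ n γ := by
    rw [Equiv.Perm.inv_def, Equiv.symm_apply_eq, hσ, Equiv.apply_symm_apply]

/-- The relation `∼`. -/
def smulKer : Setoid Γ :=
  Setoid.ker fun γ (n : N) => n • γ

variable {N Γ}

theorem smulKer_iff {γ δ : Γ} : smulKer N Γ γ δ ↔ ∀ n : N, n • γ = n • δ :=
  Setoid.ker_def.trans funext_iff

theorem smulKer_smul (σ : equivariantPerm N Γ) {γ δ : Γ} (h : smulKer N Γ γ δ) :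
    smulKer N Γ (σ • γ) (σ • δ) := by
  rw [smulKer_iff] at h ⊢
  intro n
  change n • (σ : Equiv.Perm Γ) γ = n • (σ : Equiv.Perm Γ) δ
  rw [← σ.2, ← σ.2, h]

theorem isRigidPoint_of_forall_smul_eq {γ : Γ} (hγ : ∀ δ : Γ, ∃ n : N, n • γ = δ) :
    Setoid.IsRigidPoint (equivariantPerm N Γ) (smulKer N Γ) γ := by
  intro σ hσ
  obtain ⟨n, hn⟩ := hγ γ
  rw [Subgroup.smul_def, Equiv.Perm.smul_def] at hσ ⊢
  calc (σ : Equiv.Perm Γ) γ = (σ : Equiv.Perm Γ) (n • γ) := by rw [hn]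
    _ = n • (σ : Equiv.Perm Γ) γ := σ.2 n γ
    _ = n • γ := smulKer_iff.mp hσ n
    _ = γ := hn

theorem isRigidPoint_zero [Zero N] [Zero Γ] (hzero_smul : ∀ γ : Γ, (0 : N) • γ = 0) :
    Setoid.IsRigidPoint (equivariantPerm N Γ) (smulKer N Γ) 0 := by
  intro σ _
  change (σ : Equiv.Perm Γ) 0 = 0
  calc (σ : Equiv.Perm Γ) 0 = (σ : Equiv.Perm Γ) ((0 : N) • 0) := by rw [hzero_smul]
    _ = 0 := by rw [σ.2, hzero_smul]

end NGroup

theorem stmt_6_general {N Γ : Type*} [AddGroup N] [Mul N] [AddGroup Γ] [SMul N Γ]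
    (hzs : ∀ n : N, n * 0 = 0)
    (hact_add : ∀ (m n : N) (γ : Γ), (m + n) • γ = m • γ + n • γ)
    (hact_mul : ∀ (m n : N) (γ : Γ), (m * n) • γ = m • (n • γ))
    (htype1 : ∀ γ : Γ, (∀ δ : Γ, ∃ n : N, n • γ = δ) ∨ (∀ n : N, n • γ = 0)) :
    ∃ X : Set Γ,
      -- X is a set of representatives of ∼ : every element of Γ is equivalent
      -- to some element of X, and distinct elements of X are inequivalent
      (∀ γ : Γ, ∃ x ∈ X, ∀ n : N, n • x = n • γ) ∧
      (∀ x ∈ X, ∀ y ∈ X, (∀ n : N, n • x = n • y) → x = y) ∧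
      -- X is invariant under every N-automorphism of Γ
      (∀ s : Γ ≃+ Γ, (∀ (n : N) (δ : Γ), s (n • δ) = n • s δ) →
        ∀ x ∈ X, s x ∈ X) ∧
      (0 : Γ) ∈ X := by
  have hzero_smul := zero_smul_of_add_smul hact_add
  have hrigid (γ : Γ) : ∃ β, smulKer N Γ β γ ∧
      Setoid.IsRigidPoint (equivariantPerm N Γ) (smulKer N Γ) β := by
    rcases htype1 γ with hgen | hann
    · exact ⟨γ, (smulKer N Γ).refl γ, isRigidPoint_of_forall_smul_eq hgen⟩
    · refine ⟨0, smulKer_iff.mpr fun n => ?_, isRigidPoint_zero hzero_smul⟩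
      rw [hann, smul_zero_of_mul_zero hzs hact_mul hzero_smul]
  obtain ⟨X, hcover, hunique, hinvariant, hzero⟩ :=
    Setoid.exists_invariant_transversal_mem (smulKer N Γ) smulKer_smul hrigid
      (isRigidPoint_zero hzero_smul)
  refine ⟨X, fun γ => ?_, fun x hx y hy hxy => hunique x hx y hy (smulKer_iff.mpr hxy),
    fun s hs => hinvariant ⟨s.toEquiv, hs⟩, hzero⟩
  obtain ⟨x, hx, hxγ⟩ := hcover γ
  exact ⟨x, hx, smulKer_iff.mp hxγ⟩

/-- Lemma 1: For a zero symmetric near-ring `N` and an `N`-group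
`Γ` of type 1, there is a set of representatives `X` of `∼` with `S(X) ⊆ X`
(for `S = Aut_N(Γ)`) and `0 ∈ X`. -/
theorem stmt_6 {N Γ : Type*} [AddGroup N] [Mul N] [AddGroup Γ] [SMul N Γ]
    (hmul_assoc : ∀ a b c : N, a * b * c = a * (b * c))
    (hrdistrib : ∀ a b c : N, (a + b) * c = a * c + b * c)
    (hzs : ∀ n : N, n * 0 = 0)
    (hact_add : ∀ (m n : N) (γ : Γ), (m + n) • γ = m • γ + n • γ)
    (hact_mul : ∀ (m n : N) (γ : Γ), (m * n) • γ = m • (n • γ))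
    -- Γ is an N-group of type 1:
    (hne : ∃ γ : Γ, γ ≠ 0)
    (hideals : ∀ I : AddSubgroup Γ, I.Normal →
      (∀ (n : N) (γ : Γ), ∀ i ∈ I, n • (γ + i) - n • γ ∈ I) → I = ⊥ ∨ I = ⊤)
    (hgen : ∃ γ₀ : Γ, ∀ δ : Γ, ∃ n : N, n • γ₀ = δ)
    (htype1 : ∀ γ : Γ, (∀ δ : Γ, ∃ n : N, n • γ = δ) ∨ (∀ n : N, n • γ = 0)) :
    ∃ X : Set Γ,
      -- X is a set of representatives of ∼ : every element of Γ is equivalent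
      -- to some element of X, and distinct elements of X are inequivalent
      (∀ γ : Γ, ∃ x ∈ X, ∀ n : N, n • x = n • γ) ∧
      (∀ x ∈ X, ∀ y ∈ X, (∀ n : N, n • x = n • y) → x = y) ∧
      -- X is invariant under every N-automorphism of Γ
      (∀ s : Γ ≃+ Γ, (∀ (n : N) (δ : Γ), s (n • δ) = n • s δ) →
        ∀ x ∈ X, s x ∈ X) ∧
      (0 : Γ) ∈ X :=
  stmt_6_general hzs hact_add hact_mul htype1
end

section
/- Let N be a zero symmetric near-ring acting 1-primitively on a faithful N-group Γ of type 1, S = Aut_N(Γ), and let x₁, x₂ be generators of Γ (Nx₁ = Nx₂ = Γ) lying in an S-invariant representative set X₁ of ∼. If x₁ and x₂ have the same annihilator (0:x₁) = (0:x₂), then x₁ and x₂ lie in the same S-orbit. -/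
/-!
Since `x₁` and `x₂` generate `Γ`, the maps `n ↦ n • xᵢ` are surjections `N → Γ` of additive groups
with kernels `(0 : xᵢ)`. Equal kernels make `n • x₁ ↦ n • x₂` a well-defined additive automorphism `s`
of `Γ`, and it commutes with the action because `n • (m • x₁) = (n * m) • x₁`. Its image `s x₁` is
`∼`-equivalent to `x₂`, and both lie in the `S`-invariant representative set `X₁`, so `s x₁ = x₂`.
-/

open Function

namespace AddMonoidHom

variable {G H K : Type*} [AddGroup G] [AddGroup H] [AddGroup K]

noncomputable def equivOfKerEq (f : G →+ H) (g : G →+ K) (hf : Surjective f) (hg : Surjective g)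
    (h : f.ker = g.ker) : H ≃+ K :=
  (QuotientAddGroup.liftEquiv f.ker hf rfl).symm.trans (QuotientAddGroup.liftEquiv f.ker hg h)

theorem equivOfKerEq_apply (f : G →+ H) (g : G →+ K) (hf : Surjective f) (hg : Surjective g)
    (h : f.ker = g.ker) (a : G) : equivOfKerEq f g hf hg h (f a) = g a := by
  have hmk : (QuotientAddGroup.liftEquiv f.ker hf rfl).symm (f a) = (a : G ⧸ f.ker) :=
    AddEquiv.symm_apply_eq _ |>.mpr rfl
  rw [equivOfKerEq, AddEquiv.trans_apply, hmk]
  rfl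

end AddMonoidHom

section NGroup

variable {N Γ : Type*} [AddGroup N] [AddGroup Γ] [SMul N Γ]

def orbitAddHom (hact_add : ∀ (m n : N) (γ : Γ), (m + n) • γ = m • γ + n • γ) (γ : Γ) :
    N →+ Γ :=
  AddMonoidHom.mk' (· • γ) (hact_add · · γ)

theorem exists_addEquiv_smul_comm_of_annihilator_eq [Mul N]
    (hact_add : ∀ (m n : N) (γ : Γ), (m + n) • γ = m • γ + n • γ)
    (hact_mul : ∀ (m n : N) (γ : Γ), (m * n) • γ = m • (n • γ)) {x₁ x₂ : Γ}
    (hgen₁ : ∀ δ : Γ, ∃ n : N, n • x₁ = δ) (hgen₂ : ∀ δ : Γ, ∃ n : N, n • x₂ = δ)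
    (hann : ∀ n : N, n • x₁ = 0 ↔ n • x₂ = 0) :
    ∃ s : Γ ≃+ Γ, (∀ (n : N) (δ : Γ), s (n • δ) = n • s δ) ∧ ∀ n : N, s (n • x₁) = n • x₂ := by
  let f₁ := orbitAddHom hact_add x₁
  let f₂ := orbitAddHom hact_add x₂
  have hker : f₁.ker = f₂.ker := AddSubgroup.ext hann
  let s := AddMonoidHom.equivOfKerEq f₁ f₂ hgen₁ hgen₂ hker
  have hs : ∀ n : N, s (n • x₁) = n • x₂ :=
    AddMonoidHom.equivOfKerEq_apply f₁ f₂ hgen₁ hgen₂ hker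
  refine ⟨s, fun n δ => ?_, hs⟩
  obtain ⟨m, rfl⟩ := hgen₁ δ
  rw [← hact_mul, hs, hs, hact_mul]

end NGroup

theorem stmt_11_general {N Γ : Type*} [AddGroup N] [Mul N] [AddGroup Γ] [SMul N Γ]
    (hact_add : ∀ (m n : N) (γ : Γ), (m + n) • γ = m • γ + n • γ)
    (hact_mul : ∀ (m n : N) (γ : Γ), (m * n) • γ = m • (n • γ))
    -- X₁ is an S-invariant set of representatives of the ∼-classes of generators:
    (X₁ : Set Γ) (hX₁gen : ∀ x ∈ X₁, ∀ δ : Γ, ∃ n : N, n • x = δ)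
    (hrep : ∀ x ∈ X₁, ∀ y ∈ X₁, (∀ n : N, n • x = n • y) → x = y)
    (hSX : ∀ s : Γ ≃+ Γ, (∀ (n : N) (δ : Γ), s (n • δ) = n • s δ) → ∀ x ∈ X₁, s x ∈ X₁)
    -- x₁, x₂ ∈ X₁ with the same annihilator:
    (x₁ x₂ : Γ) (hx₁ : x₁ ∈ X₁) (hx₂ : x₂ ∈ X₁)
    (hann : ∀ n : N, n • x₁ = 0 ↔ n • x₂ = 0) :
    -- x₁ and x₂ lie in the same S-orbit:
    ∃ s : Γ ≃+ Γ, (∀ (n : N) (δ : Γ), s (n • δ) = n • s δ) ∧ s x₁ = x₂ := by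
  obtain ⟨s, hlin, hs⟩ := exists_addEquiv_smul_comm_of_annihilator_eq hact_add hact_mul
    (hX₁gen x₁ hx₁) (hX₁gen x₂ hx₂) hann
  refine ⟨s, hlin, hrep _ (hSX s hlin x₁ hx₁) _ hx₂ fun n => ?_⟩
  rw [← hlin, hs]

/-- If two generators `x₁, x₂` in the representative set `X₁`
have the same annihilator, then they lie in the same orbit of `S = Aut_N(Γ)`. -/
theorem stmt_11 {N Γ : Type*} [AddGroup N] [Mul N] [AddGroup Γ] [SMul N Γ]
    (hmul_assoc : ∀ a b c : N, a * b * c = a * (b * c))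
    (hrdistrib : ∀ a b c : N, (a + b) * c = a * c + b * c)
    (hzs : ∀ n : N, n * 0 = 0)
    (hact_add : ∀ (m n : N) (γ : Γ), (m + n) • γ = m • γ + n • γ)
    (hact_mul : ∀ (m n : N) (γ : Γ), (m * n) • γ = m • (n • γ))
    -- Γ is a faithful N-group of type 1 on which N acts 1-primitively:
    (hfaithful : ∀ n : N, (∀ γ : Γ, n • γ = 0) → n = 0)
    (hne : ∃ γ : Γ, γ ≠ 0)
    (hideals : ∀ I : AddSubgroup Γ, I.Normal →
      (∀ (n : N) (γ : Γ), ∀ i ∈ I, n • (γ + i) - n • γ ∈ I) → I = ⊥ ∨ I = ⊤)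
    (hgen : ∃ γ₀ : Γ, ∀ δ : Γ, ∃ n : N, n • γ₀ = δ)
    (htype1 : ∀ γ : Γ, (∀ δ : Γ, ∃ n : N, n • γ = δ) ∨ (∀ n : N, n • γ = 0))
    -- X₁ is an S-invariant set of representatives of the ∼-classes of generators:
    (X₁ : Set Γ) (hX₁gen : ∀ x ∈ X₁, ∀ δ : Γ, ∃ n : N, n • x = δ)
    (hrepex : ∀ γ : Γ, (∀ δ : Γ, ∃ n : N, n • γ = δ) → ∃ x ∈ X₁, ∀ n : N, n • x = n • γ)
    (hrep : ∀ x ∈ X₁, ∀ y ∈ X₁, (∀ n : N, n • x = n • y) → x = y)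
    (hSX : ∀ s : Γ ≃+ Γ, (∀ (n : N) (δ : Γ), s (n • δ) = n • s δ) → ∀ x ∈ X₁, s x ∈ X₁)
    -- x₁, x₂ ∈ X₁ with the same annihilator:
    (x₁ x₂ : Γ) (hx₁ : x₁ ∈ X₁) (hx₂ : x₂ ∈ X₁)
    (hann : ∀ n : N, n • x₁ = 0 ↔ n • x₂ = 0) :
    -- x₁ and x₂ lie in the same S-orbit:
    ∃ s : Γ ≃+ Γ, (∀ (n : N) (δ : Γ), s (n • δ) = n • s δ) ∧ s x₁ = x₂ :=
  stmt_11_general hact_add hact_mul X₁ hX₁gen hrep hSX x₁ x₂ hx₁ hx₂ hann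
end

section
/- Let (Γ,+) be a group, S ≤ Aut(Γ,+), and G ⊆ Γ \ {0} with S(G) ⊆ G and S acting without fixed points on G (s(g) = g with g ∈ G implies s = id). Let {e_i | i ∈ I} be a complete set of orbit representatives of S on G, let ∅ ≠ J ⊆ I, set X₁ := ∪_{j∈J} S(e_j), X := {0} ∪ X₁, K := I \ J, and let f : {e_k | k ∈ K} → X₁ be any function. Define φ : Γ → X by φ(γ) = 0 if γ ∉ G, φ(γ) = γ if γ ∈ X₁, and φ(s(e_k)) = s(f(e_k)) for k ∈ K, s ∈ S. Then φ is a well-defined function satisfying φ|_X = id and φ(s(γ)) = s(φ(γ)) for all γ ∈ Γ, s ∈ S; moreover S acts without fixed points on X₁ and S(X₁) ⊆ X₁. -/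
/-!
The map `(i, s) ↦ s (e i)` from `I × S` to `Γ` is injective: distinct representatives lie in
distinct orbits, and freeness of `S` on `G` separates the points of one orbit. Hence `φ` can be
defined as the extension along this map of `(i, s) ↦ s (F i)`, where `F i = e i` for `i ∈ J`
and `F k = f k` for `k ∉ J`, with value `0` off its range. Equivariance of `φ` comes from
`t (s (e i)) = (t + s) (e i)` on the range; off the range both sides are `0`.
-/

open Function Set

namespace AddAction

variable {H α β : Type*} [AddGroup H] [AddAction H α] [AddAction H β]
  (S : AddSubgroup H) {I : Type*} (e : I → α)

def orbitMap (p : I × S) : α := (p.2 : H) +ᵥ e p.1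

def orbitUnion (J : Set I) : Set α := {x | ∃ j ∈ J, ∃ s ∈ S, s +ᵥ e j = x}

noncomputable def equivariantExtend (F : I → β) (o : β) : α → β :=
  extend (orbitMap S e) (fun p => (p.2 : H) +ᵥ F p.1) (fun _ => o)

variable {S e}

theorem orbitMap_injective {G : Set α} (heG : ∀ i, e i ∈ G)
    (hfree : ∀ s ∈ S, ∀ g ∈ G, s +ᵥ g = g → s = 0)
    (hdistinct : ∀ i j : I, ∀ s ∈ S, s +ᵥ e i = e j → i = j) :
    Injective (orbitMap S e) := by
  rintro ⟨i, s⟩ ⟨j, t⟩ h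
  have hmem : -(t : H) + s ∈ S := S.add_mem (S.neg_mem t.2) s.2
  have key : (-(t : H) + s) +ᵥ e i = e j := by
    rw [add_vadd]
    exact neg_vadd_eq_iff.2 h
  obtain rfl := hdistinct i j _ hmem key
  have hst : -(t : H) + s = 0 := hfree _ hmem _ (heG i) key
  exact Prod.ext rfl (Subtype.ext (neg_add_eq_zero.1 hst).symm)

theorem range_orbitMap_subset {G : Set α} (heG : ∀ i, e i ∈ G)
    (hSG : ∀ s ∈ S, ∀ g ∈ G, s +ᵥ g ∈ G) : range (orbitMap S e) ⊆ G := by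
  rintro _ ⟨⟨i, s⟩, rfl⟩
  exact hSG s s.2 _ (heG i)

theorem vadd_mem_range_orbitMap_iff {s : H} (hs : s ∈ S) {x : α} :
    s +ᵥ x ∈ range (orbitMap S e) ↔ x ∈ range (orbitMap S e) := by
  constructor
  · rintro ⟨⟨i, t⟩, ht⟩
    refine ⟨⟨i, ⟨-s + t, S.add_mem (S.neg_mem hs) t.2⟩⟩, ?_⟩
    simp only [orbitMap] at ht ⊢
    rw [add_vadd, ht, neg_vadd_vadd]
  · rintro ⟨⟨i, t⟩, rfl⟩
    exact ⟨⟨i, ⟨s + t, S.add_mem hs t.2⟩⟩, add_vadd _ _ _⟩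

theorem vadd_mem_orbitUnion {J : Set I} {s : H} (hs : s ∈ S) {x : α}
    (hx : x ∈ orbitUnion S e J) : s +ᵥ x ∈ orbitUnion S e J := by
  obtain ⟨j, hj, t, ht, rfl⟩ := hx
  exact ⟨j, hj, s + t, S.add_mem hs ht, add_vadd _ _ _⟩

theorem mem_orbitUnion_of_mem {J : Set I} {j : I} (hj : j ∈ J) : e j ∈ orbitUnion S e J :=
  ⟨j, hj, 0, S.zero_mem, zero_vadd _ _⟩

theorem orbitUnion_subset {G : Set α} (heG : ∀ i, e i ∈ G)
    (hSG : ∀ s ∈ S, ∀ g ∈ G, s +ᵥ g ∈ G) (J : Set I) : orbitUnion S e J ⊆ G := by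
  rintro _ ⟨j, -, s, hs, rfl⟩
  exact hSG s hs _ (heG j)

variable {F : I → β} {o : β}

theorem equivariantExtend_vadd_rep (hinj : Injective (orbitMap S e)) {s : H} (hs : s ∈ S)
    (i : I) :
    equivariantExtend S e F o (s +ᵥ e i) = s +ᵥ F i :=
  hinj.extend_apply _ _ (i, ⟨s, hs⟩)

theorem equivariantExtend_of_notMem_range {x : α} (hx : x ∉ range (orbitMap S e)) :
    equivariantExtend S e F o x = o :=
  extend_apply' _ _ _ hx

theorem equivariantExtend_vadd (hinj : Injective (orbitMap S e))
    (ho : ∀ s ∈ S, s +ᵥ o = o) {s : H} (hs : s ∈ S) (x : α) :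
    equivariantExtend S e F o (s +ᵥ x) = s +ᵥ equivariantExtend S e F o x := by
  by_cases hx : x ∈ range (orbitMap S e)
  · obtain ⟨⟨i, t⟩, rfl⟩ := hx
    simp only [orbitMap]
    rw [← add_vadd, equivariantExtend_vadd_rep hinj (S.add_mem hs t.2),
      equivariantExtend_vadd_rep hinj t.2, add_vadd]
  · rw [equivariantExtend_of_notMem_range hx,
      equivariantExtend_of_notMem_range (mt (vadd_mem_range_orbitMap_iff hs).1 hx), ho s hs]

theorem equivariantExtend_mem {X : Set β} (hX : ∀ s ∈ S, ∀ x ∈ X, s +ᵥ x ∈ X)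
    (hF : ∀ i, F i ∈ X) (ho : o ∈ X) (x : α) : equivariantExtend S e F o x ∈ X := by
  classical
  rw [equivariantExtend, extend_def]
  split_ifs with hx
  · exact hX _ (Classical.choose hx).2.2 _ (hF _)
  · exact ho

end AddAction

open AddAction

theorem stmt_12_general {Γ : Type*} [AddGroup Γ] (S : AddSubgroup (AddAut Γ))
    (G : Set Γ) (hG0 : (0 : Γ) ∉ G)
    (hSG : ∀ s ∈ S, ∀ g ∈ G, s g ∈ G)
    (hfpfG : ∀ s ∈ S, ∀ g ∈ G, s g = g → s = 0)
    -- {e_i | i ∈ I} is a complete set of orbit representatives of S on G: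
    {I : Type*} (e : I → Γ) (heG : ∀ i, e i ∈ G)
    (hdistinct : ∀ i j : I, ∀ s ∈ S, s (e i) = e j → i = j)
    -- ∅ ≠ J ⊆ I, X₁ := ∪_{j∈J} S(e_j), K := I \ J,
    -- f : {e_k | k ∈ K} → X₁ an arbitrary function:
    (J : Set I)
    (f : I → Γ) (hf : ∀ k ∉ J, ∃ j ∈ J, ∃ s ∈ S, s (e j) = f k) :
    -- with X₁ = ∪_{j∈J} S(e_j) and X = {0} ∪ X₁, the function φ is well
    -- defined (it exists and satisfies its defining clauses) and has the
    -- asserted properties: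
    ∃ φ : Γ → Γ,
      (∀ γ : Γ, γ ∉ G → φ γ = 0) ∧
      (∀ γ ∈ {γ : Γ | ∃ j ∈ J, ∃ s ∈ S, s (e j) = γ}, φ γ = γ) ∧
      (∀ k ∉ J, ∀ s ∈ S, φ (s (e k)) = s (f k)) ∧
      -- φ maps Γ into X = {0} ∪ X₁:
      (∀ γ : Γ, φ γ ∈ insert (0 : Γ) {γ : Γ | ∃ j ∈ J, ∃ s ∈ S, s (e j) = γ}) ∧
      -- φ|_X = id:
      (∀ x ∈ insert (0 : Γ) {γ : Γ | ∃ j ∈ J, ∃ s ∈ S, s (e j) = γ}, φ x = x) ∧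
      -- φ commutes with S:
      (∀ γ : Γ, ∀ s ∈ S, φ (s γ) = s (φ γ)) ∧
      -- S acts without fixed points on X₁:
      (∀ s ∈ S, ∀ x ∈ {γ : Γ | ∃ j ∈ J, ∃ s ∈ S, s (e j) = γ}, s x = x → s = 0) ∧
      -- S(X₁) ⊆ X₁:
      (∀ s ∈ S, ∀ x ∈ {γ : Γ | ∃ j ∈ J, ∃ s ∈ S, s (e j) = γ},
        s x ∈ {γ : Γ | ∃ j ∈ J, ∃ s ∈ S, s (e j) = γ}) := by
  classical
  set φ := equivariantExtend S e (J.piecewise e f) 0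
  have hinj : Injective (orbitMap S e) := orbitMap_injective heG hfpfG hdistinct
  have hF : ∀ i, J.piecewise e f i ∈ orbitUnion S e J := fun i => by
    by_cases hi : i ∈ J
    · rw [J.piecewise_eq_of_mem _ _ hi]
      exact mem_orbitUnion_of_mem hi
    · rw [J.piecewise_eq_of_notMem _ _ hi]
      exact hf i hi
  have hzero : ∀ γ ∉ G, φ γ = 0 := fun γ hγ =>
    equivariantExtend_of_notMem_range fun h => hγ (range_orbitMap_subset heG hSG h)
  have hid : ∀ γ ∈ orbitUnion S e J, φ γ = γ := by
    rintro _ ⟨j, hj, s, hs, rfl⟩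
    exact (equivariantExtend_vadd_rep hinj hs j).trans
      (congrArg (s +ᵥ ·) (J.piecewise_eq_of_mem _ _ hj))
  refine ⟨φ, hzero, hid, fun k hk s hs => ?_, fun γ => ?_, ?_,
    fun γ s hs => equivariantExtend_vadd hinj (fun s _ => map_zero s) hs γ,
    fun s hs x hx => hfpfG s hs x (orbitUnion_subset heG hSG J hx),
    fun s hs x hx => vadd_mem_orbitUnion hs hx⟩
  · exact (equivariantExtend_vadd_rep hinj hs k).trans
      (congrArg s (J.piecewise_eq_of_notMem _ _ hk))
  · refine equivariantExtend_mem (X := insert 0 (orbitUnion S e J)) ?_ (fun i => Or.inr (hF i))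
      (mem_insert _ _) γ
    rintro s hs _ (rfl | hx)
    exacts [Or.inl (map_zero s), Or.inr (vadd_mem_orbitUnion hs hx)]
  · rintro x (rfl | hx)
    exacts [hzero 0 hG0, hid x hx]

/-- Proposition on the construction of the sandwich function φ. -/
theorem stmt_12 {Γ : Type*} [AddGroup Γ] (S : AddSubgroup (AddAut Γ))
    (G : Set Γ) (hG0 : (0 : Γ) ∉ G)
    (hSG : ∀ s ∈ S, ∀ g ∈ G, s g ∈ G)
    (hfpfG : ∀ s ∈ S, ∀ g ∈ G, s g = g → s = 0)
    -- {e_i | i ∈ I} is a complete set of orbit representatives of S on G: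
    {I : Type*} (e : I → Γ) (heG : ∀ i, e i ∈ G)
    (hcomplete : ∀ g ∈ G, ∃ i, ∃ s ∈ S, s (e i) = g)
    (hdistinct : ∀ i j : I, ∀ s ∈ S, s (e i) = e j → i = j)
    -- ∅ ≠ J ⊆ I, X₁ := ∪_{j∈J} S(e_j), K := I \ J,
    -- f : {e_k | k ∈ K} → X₁ an arbitrary function:
    (J : Set I) (hJ : J.Nonempty)
    (f : I → Γ) (hf : ∀ k ∉ J, ∃ j ∈ J, ∃ s ∈ S, s (e j) = f k) :
    -- with X₁ = ∪_{j∈J} S(e_j) and X = {0} ∪ X₁, the function φ is well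
    -- defined (it exists and satisfies its defining clauses) and has the
    -- asserted properties:
    ∃ φ : Γ → Γ,
      (∀ γ : Γ, γ ∉ G → φ γ = 0) ∧
      (∀ γ ∈ {γ : Γ | ∃ j ∈ J, ∃ s ∈ S, s (e j) = γ}, φ γ = γ) ∧
      (∀ k ∉ J, ∀ s ∈ S, φ (s (e k)) = s (f k)) ∧
      -- φ maps Γ into X = {0} ∪ X₁:
      (∀ γ : Γ, φ γ ∈ insert (0 : Γ) {γ : Γ | ∃ j ∈ J, ∃ s ∈ S, s (e j) = γ}) ∧
      -- φ|_X = id: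
      (∀ x ∈ insert (0 : Γ) {γ : Γ | ∃ j ∈ J, ∃ s ∈ S, s (e j) = γ}, φ x = x) ∧
      -- φ commutes with S:
      (∀ γ : Γ, ∀ s ∈ S, φ (s γ) = s (φ γ)) ∧
      -- S acts without fixed points on X₁:
      (∀ s ∈ S, ∀ x ∈ {γ : Γ | ∃ j ∈ J, ∃ s ∈ S, s (e j) = γ}, s x = x → s = 0) ∧
      -- S(X₁) ⊆ X₁:
      (∀ s ∈ S, ∀ x ∈ {γ : Γ | ∃ j ∈ J, ∃ s ∈ S, s (e j) = γ},
        s x ∈ {γ : Γ | ∃ j ∈ J, ∃ s ∈ S, s (e j) = γ}) :=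
  stmt_12_general S G hG0 hSG hfpfG e heG hdistinct J f hf
end

section
/- Let p ≠ q be primes with p ∤ (q−1) and q ∤ (p−1), let Γ = ℤ_{pq}, S = Aut(Γ,+), and G = S(1) the orbit of 1 (the set of units of ℤ_{pq}). Then S acts without fixed points on G, |G| = (p−1)(q−1), and Γ₀ := Γ \ G is not a union of cosets of any nontrivial subgroup of Γ (i.e., no nontrivial subgroup I of ℤ_{pq} satisfies Γ₀ = ∪_{δ∈Γ₀} (δ + I)). -/
/-!
Every additive automorphism of `ℤ/n` is multiplication by the unit `s 1`, so the orbit of `1`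
is the unit group (of order `φ(pq) = (p-1)(q-1)`), and an automorphism fixing a unit is the
identity. For the last claim, the non-units are a union of cosets of `I` only if they are
stable under adding elements of `I`. By the Chinese remainder theorem `ℤ/pq ≅ 𝔽_p × 𝔽_q`,
and for `x = (a, b) ≠ 0` one of `0`, `(1, 0)`, `(0, 1)` is a non-unit `δ` with `δ + x` a unit.
-/

theorem Set.add_mem_of_eq_biUnion_image_add {A : Type*} [Add A] {S T : Set A}
    (h : S = ⋃ δ ∈ S, (fun i => δ + i) '' T) {δ i : A} (hδ : δ ∈ S) (hi : i ∈ T) :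
    δ + i ∈ S := by
  rw [h]
  exact Set.mem_biUnion hδ ⟨i, hi, rfl⟩

theorem Prod.exists_not_isUnit_isUnit_add {K L : Type*} [DivisionRing K] [DivisionRing L]
    {x : K × L} (hx : x ≠ 0) : ∃ δ : K × L, ¬IsUnit δ ∧ IsUnit (δ + x) := by
  obtain ⟨a, b⟩ := x
  simp only [Prod.isUnit_iff, isUnit_iff_ne_zero, Prod.fst_add, Prod.snd_add, ne_eq]
  by_cases ha : a = 0
  · subst ha
    have hb : b ≠ 0 := fun hb => hx (by rw [hb]; rfl)
    exact ⟨(1, 0), by simp [hb]⟩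
  · by_cases hb : b = 0
    · subst hb
      exact ⟨(0, 1), by simp [ha]⟩
    · exact ⟨0, by simp [ha, hb]⟩

namespace ZMod

theorem exists_not_isUnit_isUnit_add {p q : ℕ} (hp : p.Prime) (hq : q.Prime) (hpq : p ≠ q)
    {x : ZMod (p * q)} (hx : x ≠ 0) : ∃ δ : ZMod (p * q), ¬IsUnit δ ∧ IsUnit (δ + x) := by
  have := Fact.mk hp
  have := Fact.mk hq
  let e := chineseRemainder ((Nat.coprime_primes hp hq).mpr hpq)
  obtain ⟨δ, hδ, hδx⟩ := Prod.exists_not_isUnit_isUnit_add (e.map_ne_zero_iff.mpr hx)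
  refine ⟨e.symm δ, ?_, ?_⟩
  · rwa [isUnit_map_iff]
  · rwa [← isUnit_map_iff e, map_add, e.apply_symm_apply]

variable {n : ℕ}

theorem addAut_apply_eq_mul (s : AddAut (ZMod n)) (x : ZMod n) : s x = s 1 * x := by
  rw [mul_comm, ← x.intCast_zmod_cast, ← zsmul_eq_mul, ← map_zsmul, zsmul_one]

theorem isUnit_iff_exists_addAut_apply_one (γ : ZMod n) :
    IsUnit γ ↔ ∃ s : AddAut (ZMod n), s 1 = γ := by
  constructor
  · rintro ⟨u, rfl⟩
    exact ⟨AddAut.mulLeft u, by simp [Units.smul_def]⟩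
  · rintro ⟨s, rfl⟩
    exact ⟨(AddAutEquivUnits n s).toMul, by simp⟩

theorem addAut_eq_zero_of_apply_eq_self {s : AddAut (ZMod n)} {g : ZMod n} (hg : IsUnit g)
    (h : s g = g) : s = 0 := by
  rw [addAut_apply_eq_mul] at h
  have h1 : s 1 = 1 := hg.mul_left_injective (h.trans (one_mul g).symm)
  ext x
  rw [addAut_apply_eq_mul, h1, one_mul]
  rfl

theorem natCard_setOf_isUnit [NeZero n] : Nat.card {γ : ZMod n | IsUnit γ} = n.totient := by
  rw [← card_units_eq_totient, ← Nat.card_eq_fintype_card]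
  exact Nat.card_range_of_injective Units.val_injective

end ZMod

theorem stmt_17_general (p q : ℕ) (hp : p.Prime) (hq : q.Prime) (hpq : p ≠ q) :
    letI G : Set (ZMod (p * q)) := {γ | ∃ s : AddAut (ZMod (p * q)), s 1 = γ}
    -- S acts without fixed points on G:
    (∀ s : AddAut (ZMod (p * q)), ∀ g ∈ G, s g = g → s = 0) ∧
    -- |G| = (p-1)(q-1):
    (Nat.card G = (p - 1) * (q - 1)) ∧
    -- Γ₀ = Γ \ G is not a union of cosets of a nontrivial subgroup:
    (∀ I : AddSubgroup (ZMod (p * q)), I ≠ ⊥ → I ≠ ⊤ →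
      ¬ ({γ : ZMod (p * q) | γ ∉ G}
          = ⋃ δ ∈ {γ : ZMod (p * q) | γ ∉ G},
              (fun i : ZMod (p * q) => δ + i) '' (I : Set (ZMod (p * q))))) := by
  have : NeZero (p * q) := ⟨Nat.mul_ne_zero hp.ne_zero hq.ne_zero⟩
  simp only [← ZMod.isUnit_iff_exists_addAut_apply_one]
  refine ⟨fun s g hg => ZMod.addAut_eq_zero_of_apply_eq_self hg, ?_, ?_⟩
  · rw [ZMod.natCard_setOf_isUnit, Nat.totient_mul ((Nat.coprime_primes hp hq).mpr hpq),
      Nat.totient_prime hp, Nat.totient_prime hq]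
  · intro I hI _ hcosets
    obtain ⟨x, hxI, hx⟩ := (I.bot_or_exists_ne_zero).resolve_left hI
    obtain ⟨δ, hδ, hδx⟩ := ZMod.exists_not_isUnit_isUnit_add hp hq hpq hx
    exact Set.add_mem_of_eq_biUnion_image_add hcosets hδ hxI hδx

/-- For distinct primes `p, q` with `p ∤ q-1` and `q ∤ p-1`,
`Γ = ℤ_{pq}`, `S = Aut(Γ,+)` and `G = S(1)` the orbit of `1`: `S` acts without
fixed points on `G`, `|G| = (p-1)(q-1)`, and `Γ₀ = Γ \ G` is not a union of
cosets of any nontrivial subgroup of `Γ`. -/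
theorem stmt_17 (p q : ℕ) (hp : p.Prime) (hq : q.Prime) (hpq : p ≠ q)
    (hpq1 : ¬ p ∣ (q - 1)) (hqp1 : ¬ q ∣ (p - 1)) :
    letI G : Set (ZMod (p * q)) := {γ | ∃ s : AddAut (ZMod (p * q)), s 1 = γ}
    -- S acts without fixed points on G:
    (∀ s : AddAut (ZMod (p * q)), ∀ g ∈ G, s g = g → s = 0) ∧
    -- |G| = (p-1)(q-1):
    (Nat.card G = (p - 1) * (q - 1)) ∧
    -- Γ₀ = Γ \ G is not a union of cosets of a nontrivial subgroup:
    (∀ I : AddSubgroup (ZMod (p * q)), I ≠ ⊥ → I ≠ ⊤ →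
      ¬ ({γ : ZMod (p * q) | γ ∉ G}
          = ⋃ δ ∈ {γ : ZMod (p * q) | γ ∉ G},
              (fun i : ZMod (p * q) => δ + i) '' (I : Set (ZMod (p * q))))) :=
  stmt_17_general p q hp hq hpq
end

section
/- Let (Γ,+) be a group, X = {0} ∪ X₁ ⊆ Γ with X₁ nonempty and 0 ∉ X₁, S ≤ Aut(Γ,+) with S(X) ⊆ X and S acting without fixed points on X₁, and φ : Γ → X with φ|_X = id, φ(0) = 0, and φ∘s = s∘φ for all s ∈ S. Let M_S be a dense subnear-ring of M₀(X,Γ,φ,S), and make Γ an M_S-group via m ⊙ γ := m(φ(γ)). Then Γ is a faithful M_S-group, and for Γ₀ := {γ | φ(γ) = 0}: M_S ⊙ δ = {0} for δ ∈ Γ₀ and M_S ⊙ γ = Γ for γ ∈ Γ \ Γ₀. -/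
/-- The sandwich multiplication `f ∘' g = f ∘ φ ∘ g` on functions `X → Γ`. -/
def sandwichMul {Γ : Type*} {X : Set Γ} (φ : Γ → Γ) (hφX : ∀ γ : Γ, φ γ ∈ X)
    (f g : X → Γ) : X → Γ :=
  fun x => f ⟨φ (g x), hφX (g x)⟩

/-!
Since `φ` fixes `X`, `m ⊙ x = m x` on `X`, which gives faithfulness, and every `m ∈ M₀`
vanishes at `0 = φ δ` for `δ ∈ Γ₀`. For `x₀ = φ γ ∈ X₁` the stabiliser of `x₀` in `S` is
trivial, so `s x₀ ↦ s δ` together with `0` off the orbit `S x₀` is a well-defined element of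
`M₀`; density provides an `m ∈ M_S` agreeing with it at `x₀`, i.e. `m ⊙ γ = δ`.
-/

open AddAction

section OrbitExtend

variable {α β : Type*}

/-- The map `g +ᵥ x₀ ↦ g +ᵥ y`, extended by `b₀` off the orbit of `x₀`; the chosen `g` matters
only when the stabiliser of `x₀` is nontrivial. -/
noncomputable def orbitExtend (G : Type*) [AddGroup G] [AddAction G α] [AddAction G β]
    (x₀ : α) (y b₀ : β) (x : α) : β :=
  open Classical in
  if h : x ∈ orbit G x₀ then (mem_orbit_iff.mp h).choose +ᵥ y else b₀

variable {G : Type*} [AddGroup G] [AddAction G α] [AddAction G β] {x₀ : α}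

theorem vadd_left_injective_of_free (hfree : ∀ g : G, g +ᵥ x₀ = x₀ → g = 0) :
    Function.Injective (· +ᵥ x₀ : G → α) := by
  intro g h hgh
  have hfix : (-h + g) +ᵥ x₀ = x₀ := by
    rw [← vadd_vadd, neg_vadd_eq_iff]
    exact hgh
  simpa [neg_add_eq_zero, eq_comm] using hfree _ hfix

theorem orbitExtend_vadd (hfree : ∀ g : G, g +ᵥ x₀ = x₀ → g = 0) (y b₀ : β) (g : G) :
    orbitExtend G x₀ y b₀ (g +ᵥ x₀) = g +ᵥ y := by
  have h := mem_orbit x₀ g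
  rw [orbitExtend, dif_pos h, vadd_left_injective_of_free hfree (mem_orbit_iff.mp h).choose_spec]

theorem orbitExtend_of_notMem {x : α} (hx : x ∉ orbit G x₀) (y b₀ : β) :
    orbitExtend G x₀ y b₀ x = b₀ :=
  dif_neg hx

theorem orbitExtend_vadd_apply (hfree : ∀ g : G, g +ᵥ x₀ = x₀ → g = 0) (y : β) {b₀ : β}
    (hb₀ : ∀ g : G, g +ᵥ b₀ = b₀) (g : G) (x : α) :
    orbitExtend G x₀ y b₀ (g +ᵥ x) = g +ᵥ orbitExtend G x₀ y b₀ x := by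
  by_cases hx : x ∈ orbit G x₀
  · obtain ⟨h, rfl⟩ := mem_orbit_iff.mp hx
    rw [vadd_vadd, orbitExtend_vadd hfree, orbitExtend_vadd hfree, vadd_vadd]
  · have hgx : g +ᵥ x ∉ orbit G x₀ := fun hgx ↦
      hx (by simpa using mem_orbit_of_mem_orbit (-g) hgx)
    rw [orbitExtend_of_notMem hx, orbitExtend_of_notMem hgx, hb₀]

theorem orbitExtend_of_isFixedPt {a : α} (ha : ∀ g : G, g +ᵥ a = a) (hax₀ : a ≠ x₀)
    (y b₀ : β) : orbitExtend G x₀ y b₀ a = b₀ := by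
  refine orbitExtend_of_notMem (fun h ↦ hax₀ ?_) y b₀
  obtain ⟨g, rfl⟩ := mem_orbit_iff.mp h
  simpa using (ha (-g)).symm

end OrbitExtend

theorem stmt_18_general {Γ : Type*} [AddGroup Γ]
    (X₁ : Set Γ) (h0X₁ : (0 : Γ) ∉ X₁)
    (S : AddSubgroup (AddAut Γ))
    (hSX : ∀ s ∈ S, ∀ x ∈ insert (0 : Γ) X₁, s x ∈ insert (0 : Γ) X₁)
    (hfpf : ∀ s ∈ S, ∀ x ∈ X₁, s x = x → s = 0)
    (φ : Γ → Γ) (hφX : ∀ γ : Γ, φ γ ∈ insert (0 : Γ) X₁)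
    (hφid : ∀ x ∈ insert (0 : Γ) X₁, φ x = x)
    -- the sandwich centralizer near-ring M₀(X,Γ,φ,S):
    (M₀ : Set ((insert (0 : Γ) X₁ : Set Γ) → Γ))
    (hM₀ : M₀ = {f | f ⟨0, Set.mem_insert 0 X₁⟩ = 0 ∧
      ∀ s : AddAut Γ, ∀ hs : s ∈ S, ∀ x : (insert (0 : Γ) X₁ : Set Γ),
        f ⟨s x, hSX s hs x x.2⟩ = s (f x)})
    -- M_S is a subnear-ring of M₀(X,Γ,φ,S):
    (MS : Set ((insert (0 : Γ) X₁ : Set Γ) → Γ)) (hMS : MS ⊆ M₀)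
    -- M_S is dense in M₀(X,Γ,φ,S):
    (hdense : ∀ T : Finset Γ, ↑T ⊆ insert (0 : Γ) X₁ → ∀ g ∈ M₀,
      ∃ f ∈ MS, ∀ x : (insert (0 : Γ) X₁ : Set Γ), (x : Γ) ∈ T → f x = g x) :
    -- Γ is a faithful M_S-group via m ⊙ γ := m (φ γ):
    (∀ m ∈ MS, (∀ γ : Γ, m ⟨φ γ, hφX γ⟩ = 0) → m = 0) ∧
    -- M_S ⊙ δ = {0} for δ ∈ Γ₀ = {γ | φ γ = 0}:
    (∀ δ : Γ, φ δ = 0 → ∀ m ∈ MS, m ⟨φ δ, hφX δ⟩ = 0) ∧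
    -- M_S ⊙ γ = Γ for γ ∈ Γ \ Γ₀:
    (∀ γ : Γ, φ γ ≠ 0 → ∀ δ : Γ, ∃ m ∈ MS, m ⟨φ γ, hφX γ⟩ = δ) := by
  refine ⟨fun m _ hm ↦ funext fun x ↦ ?_, fun δ hδ m hm ↦ ?_, fun γ hγ δ ↦ ?_⟩
  · exact (congrArg m (Subtype.ext (hφid x x.2))).symm.trans (hm x)
  · rw [show (⟨φ δ, hφX δ⟩ : (insert (0 : Γ) X₁ : Set Γ)) = ⟨0, Set.mem_insert 0 X₁⟩ from
      Subtype.ext hδ]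
    exact (hM₀ ▸ hMS hm).1
  set x₀ := φ γ
  have hx₀X₁ : x₀ ∈ X₁ := (hφX γ).resolve_left hγ
  have hfree : ∀ s : S, s +ᵥ x₀ = x₀ → s = 0 := fun s hs ↦
    Subtype.ext (hfpf s s.2 x₀ hx₀X₁ hs)
  let g : (insert (0 : Γ) X₁ : Set Γ) → Γ := fun x ↦ orbitExtend S x₀ δ 0 x
  have hgM₀ : g ∈ M₀ := hM₀ ▸ ⟨orbitExtend_of_isFixedPt (fun s ↦ map_zero _)
      (ne_of_mem_of_not_mem hx₀X₁ h0X₁).symm δ 0,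
    fun s hs x ↦ orbitExtend_vadd_apply hfree δ (fun s ↦ map_zero _) ⟨s, hs⟩ x⟩
  obtain ⟨f, hfMS, hf⟩ := hdense {x₀} (by simpa using hφX γ) g hgM₀
  refine ⟨f, hfMS, ?_⟩
  rw [hf _ (Finset.mem_singleton_self _)]
  simpa using orbitExtend_vadd hfree δ 0 0

/-- If `M_S` is a dense subnear-ring of `M₀(X,Γ,φ,S)` and `Γ` is
made an `M_S`-group via `m ⊙ γ := m(φ(γ))`, then `Γ` is a faithful `M_S`-group
with `M_S ⊙ δ = {0}` for `δ ∈ Γ₀` and `M_S ⊙ γ = Γ` for `γ ∈ Γ \ Γ₀`. -/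
theorem stmt_18 {Γ : Type*} [AddGroup Γ]
    (X₁ : Set Γ) (hX₁ne : X₁.Nonempty) (h0X₁ : (0 : Γ) ∉ X₁)
    (S : AddSubgroup (AddAut Γ))
    (hSX : ∀ s ∈ S, ∀ x ∈ insert (0 : Γ) X₁, s x ∈ insert (0 : Γ) X₁)
    (hfpf : ∀ s ∈ S, ∀ x ∈ X₁, s x = x → s = 0)
    (φ : Γ → Γ) (hφX : ∀ γ : Γ, φ γ ∈ insert (0 : Γ) X₁)
    (hφid : ∀ x ∈ insert (0 : Γ) X₁, φ x = x) (hφ0 : φ 0 = 0)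
    (hφS : ∀ γ : Γ, ∀ s ∈ S, φ (s γ) = s (φ γ))
    -- the sandwich centralizer near-ring M₀(X,Γ,φ,S):
    (M₀ : Set ((insert (0 : Γ) X₁ : Set Γ) → Γ))
    (hM₀ : M₀ = {f | f ⟨0, Set.mem_insert 0 X₁⟩ = 0 ∧
      ∀ s : AddAut Γ, ∀ hs : s ∈ S, ∀ x : (insert (0 : Γ) X₁ : Set Γ),
        f ⟨s x, hSX s hs x x.2⟩ = s (f x)})
    -- M_S is a subnear-ring of M₀(X,Γ,φ,S):
    (MS : Set ((insert (0 : Γ) X₁ : Set Γ) → Γ)) (hMS : MS ⊆ M₀)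
    (hMS0 : 0 ∈ MS)
    (hMSadd : ∀ f ∈ MS, ∀ g ∈ MS, f + g ∈ MS)
    (hMSneg : ∀ f ∈ MS, -f ∈ MS)
    (hMSmul : ∀ f ∈ MS, ∀ g ∈ MS, sandwichMul φ hφX f g ∈ MS)
    -- M_S is dense in M₀(X,Γ,φ,S):
    (hdense : ∀ T : Finset Γ, ↑T ⊆ insert (0 : Γ) X₁ → ∀ g ∈ M₀,
      ∃ f ∈ MS, ∀ x : (insert (0 : Γ) X₁ : Set Γ), (x : Γ) ∈ T → f x = g x) :
    -- Γ is a faithful M_S-group via m ⊙ γ := m (φ γ):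
    (∀ m ∈ MS, (∀ γ : Γ, m ⟨φ γ, hφX γ⟩ = 0) → m = 0) ∧
    -- M_S ⊙ δ = {0} for δ ∈ Γ₀ = {γ | φ γ = 0}:
    (∀ δ : Γ, φ δ = 0 → ∀ m ∈ MS, m ⟨φ δ, hφX δ⟩ = 0) ∧
    -- M_S ⊙ γ = Γ for γ ∈ Γ \ Γ₀:
    (∀ γ : Γ, φ γ ≠ 0 → ∀ δ : Γ, ∃ m ∈ MS, m ⟨φ γ, hφX γ⟩ = δ) :=
  stmt_18_general X₁ h0X₁ S hSX hfpf φ hφX hφid M₀ hM₀ MS hMS hdense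
end
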